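/- Let n ≥ 2, let 2 ≤ p ≤ n and t = 2^{p−1}, and let θ : {0,1}^n → ℝ with Walsh coefficients α_j and β_j = α_j/2^{(n−2)/2}. For 1 ≤ i ≤ t, let j^{(i)} ∈ {0,1}^n be the n-bit string whose first p−1 bits are GC_t(i), whose p-th bit is 1, and whose remaining n−p bits are 0. Then the matrix G_p obtained by applying, in order, R_Z(−β_{j^{(1)}};p), CNOT(cc_set(p)(1),p), R_Z(−β_{j^{(2)}};p), CNOT(cc_set(p)(2),p), …, R_Z(−β_{j^{(t)}};p), CNOT(cc_set(p)(t),p) equals the product Π_{i=1}^{t} B_{j^{(i)}}(α_{j^{(i)}}); in particular, G_p is diagonal and equals the product of B_j(α_j) over all j ∈ {0,1}^n whose last 1-bit is in position p. -/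

import Mathlib

open scoped BigOperators

/-- The CNOT gate with control `c` and target `t` (the index `i : Fin n` stands for
qubit number `i+1 ∈ {1,…,n}`). -/
noncomputable def CNOT (n : ℕ) (c t : Fin n) :
    Matrix (Fin n → Bool) (Fin n → Bool) ℂ :=
  fun k' k => if k' = Function.update k t (xor (k t) (k c)) then 1 else 0

/-- The gate `R_Z(−β; r)`: diagonal with `(k,k)` entry `exp(i β (−1)^{k_r} / 2)`. -/
noncomputable def RZ (n : ℕ) (β : ℝ) (r : Fin n) :
    Matrix (Fin n → Bool) (Fin n → Bool) ℂ :=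
  Matrix.diagonal fun k => Complex.exp (Complex.I *
    Complex.ofReal (β * (if k r then -1 else 1) / 2))

/-- The real sign `(−1)^{j·k}`. -/
noncomputable def sgn (n : ℕ) (j k : Fin n → Bool) : ℝ :=
  (-1 : ℝ) ^ (Finset.univ.filter fun i : Fin n => (j i && k i) = true).card

/-- The diagonal matrix `B_j(α)` whose `(k,k)` entry is `exp(i α 2^{−n/2} (−1)^{j·k})`. -/
noncomputable def Bmat (n : ℕ) (j : Fin n → Bool) (α : ℝ) :
    Matrix (Fin n → Bool) (Fin n → Bool) ℂ :=
  Matrix.diagonal fun k => Complex.exp (Complex.I *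
    Complex.ofReal (α * (1 / Real.sqrt 2) ^ n * sgn n j k))

/-- The qubit numbered `v ∈ {1,…,n}`, as an element of `Fin n`. -/
def qb (n : ℕ) (hn : 0 < n) (v : ℕ) : Fin n :=
  if h : v - 1 < n then ⟨v - 1, h⟩ else ⟨0, hn⟩

/-- The reflected Gray code sequence of `m`-bit strings. -/
def gray : ℕ → List (List Bool)
  | 0 => [[]]
  | m + 1 =>
    (gray m).map (fun g => g ++ [false]) ++ (gray m).reverse.map (fun g => g ++ [true])

/-- `cc_set(p)`: the list of CNOT controls. -/
def ccSet : ℕ → List ℕ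
  | 0 => []
  | 1 => []
  | 2 => [1, 1]
  | p + 3 =>
    let l := (ccSet (p + 2)).set (2 ^ (p + 1) - 1) (p + 2)
    l ++ l

/-- The `n`-bit string whose first `p−1` bits are the `(p−1)`-bit string `g`, whose
`p`-th bit is `1`, and whose remaining `n−p` bits are `0`. -/
def jstr (n p : ℕ) (g : List Bool) : Fin n → Bool :=
  fun q => if (q : ℕ) < p - 1 then g.getD q false
    else if (q : ℕ) = p - 1 then true else false

/-- The matrix `G_p` obtained by applying, in order,
`R_Z(−β_{j⁽¹⁾};p), CNOT(cc_set(p)(1),p), R_Z(−β_{j⁽²⁾};p), CNOT(cc_set(p)(2),p), …,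
R_Z(−β_{j⁽ᵗ⁾};p), CNOT(cc_set(p)(t),p)` with `t = 2^{p−1}`, where `j⁽ⁱ⁾` is the `n`-bit
string whose first `p−1` bits are `GC_t(i)`, whose `p`-th bit is `1`, and whose
remaining bits are `0`. -/
noncomputable def Gmat (n : ℕ) (hn : 0 < n) (p : ℕ) (β : (Fin n → Bool) → ℝ) :
    Matrix (Fin n → Bool) (Fin n → Bool) ℂ :=
  (List.range (2 ^ (p - 1))).foldl
    (fun M i =>
      CNOT n (qb n hn ((ccSet p).getD i 0)) (qb n hn p) *
        RZ n (β (jstr n p ((gray (p - 1)).getD i []))) (qb n hn p) * M)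
    1

lemma ccSet_succ (q : ℕ) :
    ccSet (q + 3) = ((ccSet (q+2)).set (2 ^ (q + 1) - 1) (q + 2)) ++
      ((ccSet (q+2)).set (2 ^ (q + 1) - 1) (q + 2)) := rfl

lemma ccSet_length (q : ℕ) : (ccSet (q + 2)).length = 2 ^ (q + 1) := by
  induction q with
  | zero => rfl
  | succ q ih =>
    rw [ccSet_succ, List.length_append, List.length_set, ih]
    ring

lemma ccSet_mem {q c : ℕ} (h : c ∈ ccSet (q + 2)) : 1 ≤ c ∧ c ≤ q + 1 := by
  induction q with
  | zero => simp only [show ccSet 2 = [1,1] from rfl, List.mem_cons, List.not_mem_nil, or_false] at h; rcases h with rfl | rfl <;> simp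
  | succ q ih =>
    rw [ccSet_succ, List.mem_append, or_self] at h
    rcases List.mem_or_eq_of_mem_set h with h | h
    · exact ⟨(ih h).1, (ih h).2.trans (by omega)⟩
    · omega

lemma gray_length (m : ℕ) : (gray m).length = 2 ^ m := by
  induction m with
  | zero => rfl
  | succ m ih => simp [gray, ih]; ring

lemma gray_elem_length {m : ℕ} {g : List Bool} (h : g ∈ gray m) : g.length = m := by
  induction m generalizing g with
  | zero => simp [gray] at h; simp [h]
  | succ m ih =>
    simp only [gray, List.mem_append, List.mem_map, List.mem_reverse] at h
    rcases h with ⟨g', hg', rfl⟩ | ⟨g', hg', rfl⟩ <;>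
      simp [ih hg']

lemma gray_getD_zero (m : ℕ) : (gray m).getD 0 [] = List.replicate m false := by
  induction m with
  | zero => rfl
  | succ m ih =>
    have h0 : 0 < (gray m).length := by rw [gray_length]; positivity
    rw [gray]
    rw [List.getD_append _ _ _ _ (by simpa using h0), List.getD_eq_getElem _ _ (by simpa using h0),
      List.getElem_map, List.replicate_succ', ← ih, List.getD_eq_getElem _ _ h0]

lemma gray_nodup (m : ℕ) : (gray m).Nodup := by
  induction m with
  | zero => simp [gray]
  | succ m ih =>
    rw [gray]
    have hinj : ∀ b : Bool, Function.Injective (fun g : List Bool => g ++ [b]) := by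
      intro b g₁ g₂ h
      simpa using congrArg List.dropLast h
    refine List.Nodup.append (ih.map (hinj false)) (((List.nodup_reverse.mpr ih).map (hinj true))) ?_
    intro x hx hy
    simp only [List.mem_map, List.mem_reverse] at hx hy
    obtain ⟨g₁, _, rfl⟩ := hx
    obtain ⟨g₂, _, h⟩ := hy
    have := congrArg List.getLast? h
    simp [List.getLast?_concat] at this

lemma gray_complete {m : ℕ} {g : List Bool} (h : g.length = m) : g ∈ gray m := by
  induction m generalizing g with
  | zero => simp [List.length_eq_zero_iff.mp h, gray]
  | succ m ih =>
    have hne : g ≠ [] := by intro h'; simp [h'] at h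
    have hg : g.dropLast ++ [g.getLast hne] = g := List.dropLast_append_getLast hne
    have hlen : g.dropLast.length = m := by
      rw [List.length_dropLast, h]; omega
    rw [gray, List.mem_append]
    cases hb : g.getLast hne
    · left
      rw [List.mem_map]
      exact ⟨g.dropLast, ih hlen, by rw [← hb, hg]⟩
    · right
      rw [List.mem_map]
      exact ⟨g.dropLast, by rw [List.mem_reverse]; exact ih hlen, by rw [← hb, hg]⟩

lemma gray_reflect {m i : ℕ} (hi : i < 2 ^ m) (hm : 1 ≤ m) :
    ∃ (h : List Bool) (b : Bool), (gray m).getD i [] = h ++ [b] ∧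
      (gray m).getD (2 ^ m - 1 - i) [] = h ++ [!b] := by
  obtain ⟨m, rfl⟩ : ∃ m', m = m' + 1 := ⟨m - 1, by omega⟩
  have hlenA : ((gray m).map (fun g => g ++ [false])).length = 2 ^ m := by
    simp [gray_length]
  have hlen2 : ((gray m).reverse.map (fun g => g ++ [true])).length = 2 ^ m := by
    simp [gray_length]
  -- helper for i < 2 ^ m
  have key : ∀ i < 2 ^ m, (gray (m+1)).getD i [] = (gray m).getD i [] ++ [false] ∧
      (gray (m+1)).getD (2 ^ (m+1) - 1 - i) [] = (gray m).getD i [] ++ [true] := by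
    intro i hi
    constructor
    · rw [gray, List.getD_append _ _ _ _ (by rw [hlenA]; exact hi),
        List.getD_eq_getElem _ _ (by rw [hlenA]; exact hi), List.getElem_map,
        List.getD_eq_getElem _ _ (by rw [gray_length]; exact hi)]
    · have h1 : 2 ^ (m+1) - 1 - i = ((gray m).map (fun g => g ++ [false])).length
          + (2 ^ m - 1 - i) := by rw [hlenA]; ring_nf; omega
      rw [gray, h1, List.getD_append_right _ _ _ _ (Nat.le_add_right _ _),
        Nat.add_sub_cancel_left]
      have h2 : 2 ^ m - 1 - i < 2 ^ m := by omega
      rw [List.getD_eq_getElem _ _ (by rw [hlen2]; exact h2), List.getElem_map,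
        List.getElem_reverse, List.getD_eq_getElem _ _ (by rw [gray_length]; exact hi)]
      congr 2
      rw [gray_length]
      omega
  rcases lt_or_ge i (2 ^ m) with h | h
  · obtain ⟨h1, h2⟩ := key i h
    exact ⟨(gray m).getD i [], false, h1, h2⟩
  · have hi' : 2 ^ (m+1) - 1 - i < 2 ^ m := by
      have : (2:ℕ) ^ (m+1) = 2 ^ m * 2 := by ring
      omega
    obtain ⟨h1, h2⟩ := key _ hi'
    have hii : 2 ^ (m+1) - 1 - (2 ^ (m+1) - 1 - i) = i := by
      have h2m : (2:ℕ) ^ (m+1) = 2 ^ m * 2 := by ring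
      omega
    rw [hii] at h2
    exact ⟨(gray m).getD (2 ^ (m+1) - 1 - i) [], true, h2, by simpa using h1⟩
/-- dot product of a bit string with `f`, bits indexed from `q`. -/
def dotGAux (f : ℕ → Bool) : ℕ → List Bool → Bool
  | _, [] => false
  | q, b :: g => xor (b && f q) (dotGAux f (q+1) g)

def dotG (f : ℕ → Bool) (g : List Bool) : Bool := dotGAux f 0 g

lemma dotGAux_append (f : ℕ → Bool) (b : Bool) (g : List Bool) (q : ℕ) :
    dotGAux f q (g ++ [b]) = xor (dotGAux f q g) (b && f (q + g.length)) := by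
  induction g generalizing q with
  | nil => simp [dotGAux]
  | cons c g ih =>
    have h : q + (g.length + 1) = q + 1 + g.length := by omega
    simp [List.cons_append, dotGAux, ih, h, Bool.xor_assoc]

lemma dotG_append (f : ℕ → Bool) (b : Bool) (g : List Bool) :
    dotG f (g ++ [b]) = xor (dotG f g) (b && f g.length) := by
  simpa [dotG] using dotGAux_append f b g 0

lemma dotG_replicate (f : ℕ → Bool) (m : ℕ) : dotG f (List.replicate m false) = false := by
  induction m with
  | zero => rfl
  | succ m ih => rw [List.replicate_succ', dotG_append, ih]; simp

lemma dotG_gray_reflect {m i : ℕ} (hi : i < 2 ^ m) (hm : 1 ≤ m) (f : ℕ → Bool) :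
    dotG f ((gray m).getD (2 ^ m - 1 - i) []) =
      xor (dotG f ((gray m).getD i [])) (f (m - 1)) := by
  obtain ⟨h, b, h1, h2⟩ := gray_reflect hi hm
  have hmem : (gray m).getD i [] ∈ gray m := by
    rw [List.getD_eq_getElem _ _ (by rw [gray_length]; exact hi)]
    exact List.getElem_mem _
  have hlen : h.length = m - 1 := by
    have := gray_elem_length hmem
    rw [h1] at this
    simp at this
    omega
  rw [h1, h2, dotG_append, dotG_append, hlen]
  cases b <;> simp

lemma dotG_gray_last {m : ℕ} (hm : 1 ≤ m) (f : ℕ → Bool) :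
    dotG f ((gray m).getD (2 ^ m - 1) []) = f (m - 1) := by
  have h := dotG_gray_reflect (i := 0) (by positivity) hm f
  rw [gray_getD_zero, dotG_replicate] at h
  simpa using h

def xorCtl (f : ℕ → Bool) : List ℕ → Bool
  | [] => false
  | c :: l => xor (f (c - 1)) (xorCtl f l)

lemma xorCtl_append (f : ℕ → Bool) (l₁ l₂ : List ℕ) :
    xorCtl f (l₁ ++ l₂) = xor (xorCtl f l₁) (xorCtl f l₂) := by
  induction l₁ with
  | nil => simp [xorCtl]
  | cons c l ih => simp [xorCtl, ih, Bool.xor_assoc]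

lemma xorCtl_take_succ (f : ℕ → Bool) (L : List ℕ) (i : ℕ) (h : i < L.length) :
    xorCtl f (L.take (i+1)) = xor (xorCtl f (L.take i)) (f (L.getD i 0 - 1)) := by
  rw [List.take_succ, List.getElem?_eq_getElem h]
  rw [xorCtl_append, List.getD_eq_getElem _ _ h]
  simp [xorCtl]

lemma xorCtl_key : ∀ q : ℕ, ∀ i < 2 ^ (q + 1), ∀ f : ℕ → Bool,
    xorCtl f ((ccSet (q + 2)).take i) = dotG f ((gray (q + 1)).getD i []) := by
  intro q
  induction q with
  | zero =>
    intro i hi f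
    interval_cases i <;> simp [ccSet, gray, xorCtl, dotG, dotGAux]
  | succ q ih =>
    intro i hi f
    set t := 2 ^ (q + 1) with ht
    set l := (ccSet (q+2)).set (t - 1) (q + 2) with hl
    have hlset : l = (ccSet (q+2)).set (t - 1) (q + 2) := hl
    have hlen : l.length = t := by rw [hl, List.length_set, ccSet_length]
    have hcc : ccSet (q + 3) = l ++ l := ccSet_succ q
    have ht1 : 1 ≤ t := Nat.one_le_two_pow
    -- take i of l for i ≤ t - 1 agrees with ccSet (q+2)
    have htake : ∀ i' ≤ t - 1, l.take i' = (ccSet (q+2)).take i' := by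
      intro i' hi'
      rcases Nat.lt_or_ge i' (t-1) with h | h
      · exact List.take_set_of_le (Nat.le_of_lt h)
      · apply List.ext_getElem?
        intro j
        rw [List.getElem?_take, List.getElem?_take]
        split
        · next h' => rw [hl, List.getElem?_set_ne (by omega)]
        · rfl
    have hcclen : (ccSet (q+2)).length = t := ccSet_length q
    have hglen : (gray (q+1)).length = t := gray_length (q+1)
    have h2t : 2 ^ (q + 1 + 1) = 2 * t := by rw [ht]; ring
    -- xorCtl over the whole list l
    have hxl : xorCtl f l = xor (f q) (f (q + 1)) := by
      have h1 : l = l.take ((t - 1) + 1) := by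
        rw [show t - 1 + 1 = t from by omega, ← hlen, List.take_length]
      rw [h1, xorCtl_take_succ f l (t-1) (by omega), htake (t-1) le_rfl,
        ih (t-1) (by omega) f, dotG_gray_last (by omega) f]
      have h2 : l.getD (t-1) 0 = q + 2 := by
        rw [List.getD_eq_getElem?_getD, hl,
          List.getElem?_set_self (by rw [hcclen]; omega)]
        rfl
      rw [h2]
      norm_num
    -- gray (q+2) decomposition
    have hgray : gray (q+2) = (gray (q+1)).map (fun g => g ++ [false]) ++
        (gray (q+1)).reverse.map (fun g => g ++ [true]) := rfl
    have hlenA : ((gray (q+1)).map (fun g => g ++ [false])).length = t := by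
      simpa using hglen
    have hlenB : ((gray (q+1)).reverse.map (fun g => g ++ [true])).length = t := by
      simpa using hglen
    have gA : ∀ i' < t, (gray (q+2)).getD i' [] = (gray (q+1)).getD i' [] ++ [false] := by
      intro i' hi'
      rw [hgray, List.getD_append _ _ _ _ (by omega),
        List.getD_eq_getElem _ _ (by omega), List.getElem_map,
        List.getD_eq_getElem _ _ (by omega)]
    have gB : ∀ i', t ≤ i' → i' < 2 * t →
        (gray (q+2)).getD i' [] = (gray (q+1)).getD (2 * t - 1 - i') [] ++ [true] := by
      intro i' h1 h2
      rw [hgray, List.getD_append_right _ _ _ _ (by omega),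
        List.getD_eq_getElem _ _ (by rw [hlenB]; omega), List.getElem_map,
        List.getElem_reverse, List.getD_eq_getElem _ _ (by omega)]
      congr 2
      simp only [hlenA, hglen]
      omega
    have hgel : ∀ i' < t, ((gray (q+1)).getD i' []).length = q + 1 := by
      intro i' hi'
      apply gray_elem_length
      rw [List.getD_eq_getElem _ _ (by omega)]
      exact List.getElem_mem _
    rw [h2t] at hi
    rcases Nat.lt_or_ge i t with hit | hit
    · -- i < t
      rw [hcc, List.take_append, show i - l.length = 0 from by omega]
      simp only [List.take_zero, List.append_nil]
      rw [htake i (by omega), ih i (by omega) f, gA i hit, dotG_append]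
      simp
    rcases Nat.eq_or_lt_of_le hit with hit' | hit'
    · -- i = t
      rw [← hit']
      rw [hcc, List.take_append, hlen, Nat.sub_self,
        show l.take t = l from by rw [← hlen, List.take_length]]
      simp only [List.take_zero, List.append_nil]
      rw [hxl, gB t le_rfl (by omega), dotG_append, hgel _ (by omega),
        show 2 * t - 1 - t = t - 1 from by omega, dotG_gray_last (by omega) f]
      simp
    · -- t < i < 2t
      rw [hcc, List.take_append,
        show l.take i = l from List.take_of_length_le (by omega), xorCtl_append, hxl,
        hlen, htake (i - t) (by omega), ih (i - t) (by omega) f,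
        gB i (by omega) (by omega), dotG_append, hgel _ (by omega),
        show 2 * t - 1 - i = 2 ^ (q+1) - 1 - (i - t) from by omega,
        dotG_gray_reflect (by omega) (by omega) f]
      simp [Bool.xor_assoc, Bool.xor_comm, Bool.xor_left_comm]

lemma xorCtl_total (q : ℕ) (f : ℕ → Bool) : xorCtl f (ccSet (q + 2)) = false := by
  induction q with
  | zero => simp [show ccSet 2 = [1,1] from rfl, xorCtl]
  | succ q _ => rw [ccSet_succ, xorCtl_append, Bool.xor_self]

/-- sign of a Boolean -/
def sb (b : Bool) : ℝ := if b then -1 else 1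

lemma sb_xor (a b : Bool) : sb (xor a b) = sb a * sb b := by
  cases a <;> cases b <;> simp [sb]

def fnat (n : ℕ) (k : Fin n → Bool) (q : ℕ) : Bool :=
  if h : q < n then k ⟨q, h⟩ else false

lemma sgn_eq_prod (n : ℕ) (j k : Fin n → Bool) :
    sgn n j k = ∏ i : Fin n, (if (j i && k i) = true then (-1:ℝ) else 1) := by
  rw [sgn, Finset.prod_ite, Finset.prod_const, Finset.prod_const, one_pow, mul_one]

lemma sb_dotGAux (f : ℕ → Bool) (g : List Bool) (q : ℕ) :
    sb (dotGAux f q g) = ∏ i ∈ Finset.range g.length,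
      (if (g.getD i false && f (q + i)) = true then (-1:ℝ) else 1) := by
  induction g generalizing q with
  | nil => simp [dotGAux, sb]
  | cons b g ih =>
    rw [dotGAux, sb_xor, List.length_cons, Finset.prod_range_succ', ih (q+1)]
    rw [mul_comm]
    congr 1
    exact Finset.prod_congr rfl fun i _ => by
      simp [List.getD_cons_succ, show q + 1 + i = q + (i + 1) from by omega]

lemma sb_dotG (f : ℕ → Bool) (g : List Bool) :
    sb (dotG f g) = ∏ i ∈ Finset.range g.length,
      (if (g.getD i false && f i) = true then (-1:ℝ) else 1) := by
  simpa [dotG] using sb_dotGAux f g 0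

lemma sgn_jstr (n p : ℕ) (hp2 : 2 ≤ p) (hpn : p ≤ n) (g : List Bool)
    (hlen : g.length = p - 1) (k : Fin n → Bool) (hr : p - 1 < n) :
    sgn n (jstr n p g) k =
      sb (xor (k ⟨p - 1, hr⟩) (dotG (fnat n k) g)) := by
  rw [sb_xor, sgn_eq_prod, sb_dotG, hlen]
  set F : ℕ → ℝ := fun q =>
    if h : q < n then (if (jstr n p g ⟨q, h⟩ && k ⟨q, h⟩) = true then (-1:ℝ) else 1) else 1
    with hF
  have h1 : ∏ i : Fin n, (if (jstr n p g i && k i) = true then (-1:ℝ) else 1)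
      = ∏ q ∈ Finset.range n, F q := by
    rw [Finset.prod_range F]
    exact Finset.prod_congr rfl fun i _ => by simp [hF, Fin.is_lt]
  have h2 : ∏ q ∈ Finset.range n, F q = ∏ q ∈ Finset.range p, F q := by
    refine (Finset.prod_subset (Finset.range_subset_range.mpr hpn) fun q hq hq' => ?_).symm
    simp only [Finset.mem_range, not_lt] at hq'
    simp [hF, jstr, show ¬ (q < p - 1) from by omega, show q ≠ p - 1 from by omega]
  have h3 : ∏ q ∈ Finset.range p, F q = (∏ q ∈ Finset.range (p-1), F q) * F (p-1) := by
    rw [show p = (p - 1) + 1 from by omega, Finset.prod_range_succ]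
    congr 2
  have h4 : F (p-1) = if k ⟨p - 1, hr⟩ = true then (-1:ℝ) else 1 := by
    simp [hF, hr, jstr]
  have h5 : ∀ q < p - 1, F q =
      (if (g.getD q false && fnat n k q) = true then (-1:ℝ) else 1) := by
    intro q hq
    have hqn : q < n := by omega
    simp [hF, hqn, jstr, hq, fnat]
  rw [h1, h2, h3, h4, Finset.prod_congr rfl (fun q hq => h5 q (Finset.mem_range.mp hq))]
  rw [mul_comm]
  congr 1

lemma diag_list_prod {ι α : Type*} [DecidableEq α] [Fintype α] (L : List ι)
    (d : ι → α → ℂ) :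
    (L.map fun i => Matrix.diagonal (d i)).prod =
      Matrix.diagonal (fun k => (L.map fun i => d i k).prod) := by
  induction L with
  | nil => simp
  | cons i L ih =>
    simp only [List.map_cons, List.prod_cons, ih, Matrix.diagonal_mul_diagonal]

lemma list_range_map_prod {M : Type*} [CommMonoid M] (t : ℕ) (f : ℕ → M) :
    ((List.range t).map f).prod = ∏ i ∈ Finset.range t, f i := by
  induction t with
  | zero => simp
  | succ t ih => rw [List.range_succ, Finset.prod_range_succ, ← ih]; simp

def flp (n : ℕ) (c r : Fin n) (m : Fin n → Bool) : Fin n → Bool :=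
  Function.update m r (xor (m r) (m c))

lemma flp_flp {n : ℕ} {c r : Fin n} (hcr : c ≠ r) (m : Fin n → Bool) :
    flp n c r (flp n c r m) = m := by
  simp only [flp, Function.update_idem]
  rw [Function.update_self, Function.update_of_ne hcr,
    Bool.xor_assoc, Bool.xor_self, Bool.xor_false, Function.update_eq_self]

lemma CNOT_mul {n : ℕ} {c r : Fin n} (hcr : c ≠ r)
    (N : Matrix (Fin n → Bool) (Fin n → Bool) ℂ) :
    CNOT n c r * N = fun k' k => N (flp n c r k') k := by
  funext k' k
  have hiff : ∀ m, (k' = flp n c r m) ↔ (m = flp n c r k') :=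
    fun m => ⟨fun h => by rw [h, flp_flp hcr], fun h => by rw [h, flp_flp hcr]⟩
  simp only [Matrix.mul_apply, CNOT]
  calc ∑ m, (if k' = Function.update m r (xor (m r) (m c)) then (1:ℂ) else 0) * N m k
      = ∑ m, (if m = flp n c r k' then (1:ℂ) else 0) * N m k := by
        refine Finset.sum_congr rfl fun m _ => ?_
        rw [show (Function.update m r (xor (m r) (m c))) = flp n c r m from rfl]
        by_cases h : m = flp n c r k'
        · rw [if_pos ((hiff m).mpr h), if_pos h]
        · rw [if_neg (fun h' => h ((hiff m).mp h')), if_neg h]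
    _ = N (flp n c r k') k := by
        rw [Finset.sum_eq_single (flp n c r k')]
        · simp
        · intro b _ hb; simp [hb]
        · simp

/-- for `2 ≤ p ≤ n` and `t = 2^{p−1}`, the matrix `G_p` equals
`Π_{i=1}^{t} B_{j⁽ⁱ⁾}(α_{j⁽ⁱ⁾})`; in particular `G_p` is diagonal and equals the
product (in any order) of `B_j(α_j)` over all `j ∈ {0,1}^n` whose last `1`-bit is in
position `p`. -/
theorem stmt15 (n p : ℕ) (hn : 2 ≤ n) (hn0 : 0 < n) (hp2 : 2 ≤ p) (hpn : p ≤ n)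
    (θ : (Fin n → Bool) → ℝ) (α : (Fin n → Bool) → ℝ)
    (hα : ∀ j, α j = (1 / Real.sqrt 2) ^ n * ∑ k : Fin n → Bool, sgn n j k * θ k)
    (β : (Fin n → Bool) → ℝ)
    (hβ : ∀ j, β j = α j / Real.sqrt 2 ^ ((n : ℤ) - 2)) :
    (Gmat n hn0 p β =
      ((List.range (2 ^ (p - 1))).map fun i =>
        Bmat n (jstr n p ((gray (p - 1)).getD i []))
          (α (jstr n p ((gray (p - 1)).getD i [])))).prod) ∧
    (Gmat n hn0 p β).IsDiag ∧
    (∀ l : List (Fin n → Bool),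
      l.Perm (Finset.univ.filter fun j : Fin n → Bool =>
          j (qb n hn0 p) = true ∧ ∀ q : Fin n, qb n hn0 p < q → j q = false).toList →
      (l.map fun j => Bmat n j (α j)).prod = Gmat n hn0 p β) := by
  obtain ⟨q, rfl⟩ : ∃ q, p = q + 2 := ⟨p - 2, by omega⟩
  have hq1n : q + 1 < n := by omega
  set R : Fin n := qb n hn0 (q + 2) with hRdef
  have hR : R = ⟨q + 1, hq1n⟩ := by
    have h2 : q + 2 - 1 < n := hq1n
    rw [hRdef, qb, dif_pos h2]
    rfl
  have hcclen : (ccSet (q + 2)).length = 2 ^ (q + 1) := ccSet_length q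
  have hglen : (gray (q + 1)).length = 2 ^ (q + 1) := gray_length (q + 1)
  have hgel : ∀ i < 2 ^ (q + 1), ((gray (q + 1)).getD i []).length = q + 1 := by
    intro i hi
    apply gray_elem_length
    rw [List.getD_eq_getElem _ _ (by omega)]
    exact List.getElem_mem _
  -- the per-step data
  set J : ℕ → (Fin n → Bool) := fun i => jstr n (q + 2) ((gray (q + 1)).getD i []) with hJ
  set P : ℕ → (Fin n → Bool) → Bool :=
    fun i k => xorCtl (fnat n k) ((ccSet (q + 2)).take i) with hP
  set Φ : ℕ → (Fin n → Bool) → ℂ := fun i k => ∏ l ∈ Finset.range i,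
    Complex.exp (Complex.I * Complex.ofReal (β (J l) * sb (xor (k R) (P l k)) / 2)) with hΦ
  have claim : ∀ i ≤ 2 ^ (q + 1),
      ((List.range i).foldl
        (fun (M : Matrix (Fin n → Bool) (Fin n → Bool) ℂ) i' =>
          CNOT n (qb n hn0 ((ccSet (q + 2)).getD i' 0)) (qb n hn0 (q + 2)) *
            RZ n (β (jstr n (q + 2) ((gray (q + 2 - 1)).getD i' []))) (qb n hn0 (q + 2)) * M)
        1)
      = fun k' k => if k' = Function.update k R (xor (k R) (P i k)) then Φ i k else 0 := by
    intro i
    induction i with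
    | zero =>
      intro _
      funext k' k
      simp only [List.range_zero, List.foldl_nil, hP, hΦ]
      rw [show (ccSet (q + 2)).take 0 = [] from rfl]
      simp only [xorCtl, Bool.xor_false, Function.update_eq_self, Finset.range_zero,
        Finset.prod_empty]
      rw [Matrix.one_apply]
    | succ i ih =>
      intro hi
      rw [List.range_succ, List.foldl_append, List.foldl_cons, List.foldl_nil, ih (by omega)]
      set ci : ℕ := (ccSet (q + 2)).getD i 0 with hci
      have hmemi : ci ∈ ccSet (q + 2) := by
        rw [hci, List.getD_eq_getElem _ _ (by omega)]
        exact List.getElem_mem _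
      have hcib := ccSet_mem hmemi
      have hcin : ci - 1 < n := by omega
      set C : Fin n := qb n hn0 ci with hCdef
      have hC : C = ⟨ci - 1, hcin⟩ := by rw [hCdef, qb, dif_pos hcin]
      have hCR : C ≠ R := by
        rw [hC, hR]
        intro h
        have := Fin.mk.injEq (ci - 1) hcin (q + 1) hq1n ▸ congrArg Fin.val h
        simp at this
        omega
      have hstep : ∀ k : Fin n → Bool, P (i + 1) k = xor (P i k) (fnat n k (ci - 1)) := by
        intro k
        simp only [hP]
        have hilen : i < (ccSet (q + 2)).length := by omega
        have h := xorCtl_take_succ (fnat n k) (ccSet (q + 2)) i hilen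
        rw [hci]
        simpa using h
      have hflip : ∀ k, flp n C R (Function.update k R (xor (k R) (P i k)))
          = Function.update k R (xor (k R) (P (i + 1) k)) := by
        intro k
        rw [flp, Function.update_idem, Function.update_self, Function.update_of_ne hCR,
          hstep k, Bool.xor_assoc]
        congr 2
        rw [hC, fnat, dif_pos hcin]
      have hRZ : RZ n (β (jstr n (q + 2) ((gray (q + 2 - 1)).getD i []))) (qb n hn0 (q + 2))
          = Matrix.diagonal (fun m : Fin n → Bool =>
              Complex.exp (Complex.I * Complex.ofReal (β (J i) * sb (m R) / 2))) := rfl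
      funext k' k
      erw [Matrix.mul_assoc, CNOT_mul hCR, hRZ]
      beta_reduce; erw [Matrix.diagonal_mul]
      by_cases hk : k' = Function.update k R (xor (k R) (P (i + 1) k))
      · have hx : flp n C R k' = Function.update k R (xor (k R) (P i k)) := by
          rw [hk, ← hflip k, flp_flp hCR]
        rw [if_pos hx, if_pos hk, hx, Function.update_self]
        show _ = Φ (i + 1) k
        simp only [hΦ]
        rw [Finset.prod_range_succ, mul_comm]
      · have hx : flp n C R k' ≠ Function.update k R (xor (k R) (P i k)) := by
          intro h
          apply hk
          rw [← flp_flp hCR k', h, hflip k]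
        rw [if_neg hx, if_neg hk, mul_zero]
  have hPt : ∀ k, P (2 ^ (q + 1)) k = false := by
    intro k
    rw [hP]
    show xorCtl (fnat n k) ((ccSet (q + 2)).take (2 ^ (q + 1))) = false
    rw [← hcclen, List.take_length]
    exact xorCtl_total q (fnat n k)
  have hGm : Gmat n hn0 (q + 2) β = Matrix.diagonal (fun k => Φ (2 ^ (q + 1)) k) := by
    rw [Gmat]
    rw [show (2 : ℕ) ^ (q + 2 - 1) = 2 ^ (q + 1) from rfl, claim (2 ^ (q + 1)) le_rfl]
    funext k' k
    rw [hPt k]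
    simp only [Bool.xor_false, Function.update_eq_self]
    rw [Matrix.diagonal_apply]
    split
    · next h => rw [h]
    · rfl
  -- the factorwise identity
  have hfac : ∀ k : Fin n → Bool, ∀ i < 2 ^ (q + 1),
      β (J i) * sb (xor (k R) (P i k)) / 2
        = α (J i) * (1 / Real.sqrt 2) ^ n * sgn n (J i) k := by
    intro k i hi
    have hs2 : Real.sqrt 2 ≠ 0 := by positivity
    have hpow : Real.sqrt 2 ^ ((n : ℤ) - 2) = Real.sqrt 2 ^ n / 2 := by
      rw [zpow_sub₀ hs2, zpow_natCast]
      congr 1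
      rw [show ((2:ℤ)) = ((2:ℕ) : ℤ) from rfl, zpow_natCast, Real.sq_sqrt (by norm_num)]
    have hb2 : β (J i) / 2 = α (J i) * (1 / Real.sqrt 2) ^ n := by
      rw [hβ (J i), hpow, div_pow, one_pow]
      have h2 : Real.sqrt 2 ^ n ≠ 0 := pow_ne_zero _ hs2
      field_simp
    have hsgn : sgn n (J i) k = sb (xor (k R) (P i k)) := by
      have h1 := sgn_jstr n (q + 2) hp2 hpn ((gray (q + 1)).getD i []) (hgel i hi) k hq1n
      simp only [hJ, hP]
      rw [xorCtl_key q i hi (fnat n k), hR]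
      exact h1
    rw [hsgn, ← hb2]
    ring
  have hBprod : ((List.range (2 ^ (q + 2 - 1))).map fun i =>
        Bmat n (jstr n (q + 2) ((gray (q + 2 - 1)).getD i []))
          (α (jstr n (q + 2) ((gray (q + 2 - 1)).getD i [])))).prod
      = Matrix.diagonal (fun k => Φ (2 ^ (q + 1)) k) := by
    rw [show (2 : ℕ) ^ (q + 2 - 1) = 2 ^ (q + 1) from rfl]
    simp only [Bmat]
    rw [diag_list_prod]
    refine congrArg Matrix.diagonal (funext fun k => ?_)
    rw [list_range_map_prod]
    simp only [hΦ]
    refine Finset.prod_congr rfl fun i hi => ?_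
    rw [hfac k i (Finset.mem_range.mp hi)]
    rfl

  refine ⟨by rw [hGm, hBprod], by rw [hGm]; exact Matrix.isDiag_diagonal _, ?_⟩
  intro l hl
  set Blist := fun j : Fin n → Bool => Bmat n j (α j) with hB
  set oL : List (Fin n → Bool) := (List.range (2 ^ (q + 1))).map J with hoL
  have hJr : ∀ i, (J i) R = true := by
    intro i
    simp only [hJ, jstr, hR]
    rw [if_neg (by omega), if_pos (by omega)]
  have hJhi : ∀ i, ∀ q' : Fin n, R < q' → (J i) q' = false := by
    intro i q' hq'
    rw [hR, Fin.lt_def] at hq'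
    simp only [hJ, jstr]
    rw [if_neg (by simp at hq' ⊢; omega), if_neg (by simp at hq' ⊢; omega)]
  have hmemS : ∀ x : Fin n → Bool, x R = true → (∀ q' : Fin n, R < q' → x q' = false) →
      ∃ i < 2 ^ (q + 1), J i = x := by
    intro x hx1 hx2
    set g : List Bool := List.ofFn (fun q' : Fin (q+1) => x ⟨q', by omega⟩) with hg
    have hglen' : g.length = q + 1 := by simp [hg]
    obtain ⟨i, hilen, hig⟩ := List.mem_iff_getElem.mp (gray_complete hglen')
    have hi : i < 2 ^ (q+1) := by rwa [hglen] at hilen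
    refine ⟨i, hi, ?_⟩
    have hgetD : (gray (q+1)).getD i [] = g := by
      rw [List.getD_eq_getElem _ _ (by omega)]; exact hig
    funext q'
    simp only [hJ, jstr, hgetD]
    rcases lt_trichotomy (q' : ℕ) (q+1) with h | h | h
    · rw [if_pos (show (q' : ℕ) < q + 2 - 1 from by omega), hg,
        List.getD_eq_getElem _ _ (by simpa using h), List.getElem_ofFn]
    · rw [if_neg (by omega), if_pos (by omega)]
      have hq'R : q' = R := Fin.ext (by rw [hR]; exact h)
      rw [hq'R, hx1]
    · rw [if_neg (by omega), if_neg (by omega)]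
      exact (hx2 q' (by rw [hR, Fin.lt_def]; simpa using h)).symm
  have hnodup : oL.Nodup := by
    rw [hoL]
    refine List.Nodup.map_on ?_ List.nodup_range
    intro i hi' i' hi'' h
    have hi : i < 2 ^ (q+1) := List.mem_range.mp hi'
    have hi2 : i' < 2 ^ (q+1) := List.mem_range.mp hi''
    have hgeqD : (gray (q+1)).getD i [] = (gray (q+1)).getD i' [] := by
      apply List.ext_getElem (by rw [hgel i hi, hgel i' hi2])
      intro m hm1 hm2
      have hmq : m < q + 1 := by rw [hgel i hi] at hm1; exact hm1
      have hmn : m < n := by omega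
      have hc := congrFun h (⟨m, hmn⟩ : Fin n)
      simp only [hJ, jstr] at hc
      rw [if_pos (show ((⟨m, hmn⟩ : Fin n) : ℕ) < q + 2 - 1 from by simp; omega)] at hc
      rw [if_pos (show m < q + 2 - 1 from by omega)] at hc
      rw [List.getD_eq_getElem _ _ (show ((⟨m, hmn⟩ : Fin n) : ℕ) < ((gray (q+1)).getD i []).length from by rw [hgel i hi]; simp; omega)] at hc
      rw [List.getD_eq_getElem _ _ (show ((⟨m, hmn⟩ : Fin n) : ℕ) < ((gray (q+1)).getD i' []).length from by rw [hgel i' hi2]; simp; omega)] at hc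
      exact hc
    have hgeq : (gray (q+1))[i]'(by omega) = (gray (q+1))[i']'(by omega) :=
      (List.getD_eq_getElem (gray (q+1)) [] (by omega : i < (gray (q+1)).length)).symm.trans
        (hgeqD.trans (List.getD_eq_getElem (gray (q+1)) [] (by omega : i' < (gray (q+1)).length)))
    exact ((gray_nodup (q+1)).getElem_inj_iff).mp hgeq
  have hperm : oL.Perm (Finset.univ.filter fun j : Fin n → Bool =>
      j R = true ∧ ∀ q' : Fin n, R < q' → j q' = false).toList := by
    rw [List.perm_ext_iff_of_nodup hnodup (Finset.nodup_toList _)]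
    intro x
    rw [Finset.mem_toList, Finset.mem_filter]
    constructor
    · intro hx
      obtain ⟨i, hi, rfl⟩ := List.mem_map.mp hx
      exact ⟨Finset.mem_univ _, hJr i, hJhi i⟩
    · rintro ⟨-, hx1, hx2⟩
      obtain ⟨i, hi, rfl⟩ := hmemS x hx1 hx2
      exact List.mem_map.mpr ⟨i, List.mem_range.mpr hi, rfl⟩
  have hcomm : ∀ a b : Fin n → Bool, Commute (Blist a) (Blist b) := by
    intro a b
    show Blist a * Blist b = Blist b * Blist a
    rw [hB]
    show Bmat n a (α a) * Bmat n b (α b) = Bmat n b (α b) * Bmat n a (α a)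
    rw [Bmat, Bmat, Matrix.diagonal_mul_diagonal, Matrix.diagonal_mul_diagonal]
    exact congrArg Matrix.diagonal (funext fun k => mul_comm _ _)
  have hpair : (oL.map Blist).Pairwise Commute := by
    clear hl hperm hnodup
    induction oL with
    | nil => simp
    | cons a L ih =>
      rw [List.map_cons, List.pairwise_cons]
      refine ⟨fun b hb => ?_, ih⟩
      obtain ⟨c, _, rfl⟩ := List.mem_map.mp hb
      exact hcomm a c
  have hl2 : l.Perm oL := hl.trans hperm.symm
  have hprodperm : (l.map Blist).Perm (oL.map Blist) := hl2.map _
  rw [List.Perm.prod_eq' hprodperm ((hprodperm.pairwise_iff fun h => h.symm).mpr hpair)]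
  rw [hGm, ← hBprod, hoL, List.map_map]
  rfl
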